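/- Let a be a real number and let 0 ≤ R ≤ 1. The generalized harmonic Koebe function K_{a,R} is univalent (injective) on 𝔻 if and only if −2 ≤ a ≤ 2. -/

import Mathlib

open Complex Set

noncomputable section

/-- The open unit disk in the complex plane. -/
def unitDisk : Set ℂ := {z : ℂ | ‖z‖ < 1}

/-- The generalized Koebe function `k_a`, using the principal branch of the logarithm
(via the complex power function). -/
def koebeFn (a : ℂ) (z : ℂ) : ℂ :=
  if a = 0 then (1 / 2) * Complex.log ((1 + z) / (1 - z))
  else (1 / (2 * a)) * (((1 + z) / (1 - z)) ^ a - 1)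

/-- The lens map `l_R` (with principal-branch powers); note that this formula also
gives `l_0 ≡ 0` and `l_1 = id` on the unit disk. -/
def lensMap (R : ℝ) (z : ℂ) : ℂ :=
  (((1 + z) / (1 - z)) ^ (R : ℂ) - 1) / (((1 + z) / (1 - z)) ^ (R : ℂ) + 1)

/-- The `n`-th Taylor coefficient of `f` at `0`. -/
def coeffAt (f : ℂ → ℂ) (n : ℕ) : ℂ := iteratedDeriv n f 0 / n.factorial

/-!
In the coordinate `ζ = log ((1 + z) / (1 - z))`, which maps `𝔻` onto the strip `|Im ζ| < π / 2`,
the Koebe function is `k_c = (e^{cζ} - 1) / (2c)`. Since `(1 + l_R) / (1 - l_R) = e^{Rζ}`, the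
shear system gives `h' + g' = e^{Rζ} k_a' = k_{a+R}'`, so `h + g = k_{a+R}` and
`K_{a,R} = Re k_{a+R} + i Im k_a`.

For `|a| ≤ 2` the sign of `Im k_a` is the sign of `t = Im ζ`, so two points with the same image
lie in the same half of the strip. On the level curve `Im k_a = D` of the upper half, `Re ζ` is
an explicit function of `t`, and `d/dt Re k_{a+R} = -e^{(a+R) Re ζ} cos (R t) / (2 sin (a t))`
has constant sign, so the image determines `t` and then `Re ζ`.
For `|a| > 2` the two points `± iπ / a` of the strip have the same image.
-/

open scoped Real

lemma unitDisk_eq_ball : unitDisk = Metric.ball 0 1 := by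
  ext z
  simp [unitDisk]

lemma isOpen_unitDisk : IsOpen unitDisk :=
  unitDisk_eq_ball ▸ Metric.isOpen_ball

lemma Complex.norm_sub_one_lt_norm_add_one_iff {w : ℂ} : ‖w - 1‖ < ‖w + 1‖ ↔ 0 < w.re := by
  rw [← sq_lt_sq₀ (norm_nonneg _) (norm_nonneg _), Complex.sq_norm, Complex.sq_norm,
    normSq_sub, normSq_add]
  simp only [map_one, mul_one]
  constructor <;> intro h <;> linarith

lemma Complex.add_one_ne_zero_of_re_pos {w : ℂ} (hw : 0 < w.re) : w + 1 ≠ 0 := by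
  intro h
  have := congrArg re h
  simp only [add_re, one_re, zero_re] at this
  linarith

lemma one_sub_ne_zero_of_mem_unitDisk {z : ℂ} (hz : z ∈ unitDisk) : 1 - z ≠ 0 := by
  rw [sub_ne_zero]
  rintro rfl
  simp [unitDisk] at hz

def cayley (z : ℂ) : ℂ := (1 + z) / (1 - z)

lemma re_cayley_pos {z : ℂ} (hz : z ∈ unitDisk) : 0 < (cayley z).re := by
  have h1 := one_sub_ne_zero_of_mem_unitDisk hz
  rw [cayley, ← Complex.norm_sub_one_lt_norm_add_one_iff,
    show (1 + z) / (1 - z) - 1 = 2 * z / (1 - z) by field_simp; ring,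
    show (1 + z) / (1 - z) + 1 = 2 / (1 - z) by field_simp; ring,
    norm_div, norm_div, norm_mul]
  have hz' : ‖z‖ < 1 := hz
  gcongr
  simpa using hz'

def strip : Set ℂ := {ζ | |ζ.im| < π / 2}

def stripCoord (z : ℂ) : ℂ := log (cayley z)

lemma cos_mul_pos {R t : ℝ} (hR : |R| ≤ 1) (ht : |t| < π / 2) : 0 < Real.cos (R * t) := by
  apply Real.cos_pos_of_mem_Ioo
  rw [mem_Ioo, ← abs_lt, abs_mul]
  calc |R| * |t| ≤ 1 * |t| := by gcongr
    _ < π / 2 := by rwa [one_mul]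

lemma re_exp_ofReal_mul_pos {R : ℝ} (hR : |R| ≤ 1) {ζ : ℂ} (hζ : ζ ∈ strip) :
    0 < (exp (R * ζ)).re := by
  rw [exp_re, re_ofReal_mul, im_ofReal_mul]
  exact mul_pos (Real.exp_pos _) (cos_mul_pos hR hζ)

lemma mem_slitPlane_cayley {z : ℂ} (hz : z ∈ unitDisk) : cayley z ∈ slitPlane :=
  mem_slitPlane_iff.2 (Or.inl (re_cayley_pos hz))

lemma cayley_ne_zero {z : ℂ} (hz : z ∈ unitDisk) : cayley z ≠ 0 :=
  slitPlane_ne_zero (mem_slitPlane_cayley hz)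

lemma bijOn_stripCoord : BijOn stripCoord unitDisk strip := by
  have hexp : ∀ ζ ∈ strip, 0 < (exp ζ).re := fun ζ hζ => by
    simpa using re_exp_ofReal_mul_pos (R := 1) (by simp) hζ
  refine InvOn.bijOn (f' := fun ζ => (exp ζ - 1) / (exp ζ + 1)) ⟨fun z hz => ?_, fun ζ hζ => ?_⟩
    (fun z hz => ?_) (fun ζ hζ => ?_)
  · have h1 := one_sub_ne_zero_of_mem_unitDisk hz
    have hw := cayley_ne_zero hz
    have h2 : 1 + z ≠ 0 := by simpa [cayley, h1] using hw
    simp only [stripCoord]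
    rw [exp_log hw, cayley]
    field_simp
    ring
  · have he := Complex.add_one_ne_zero_of_re_pos (hexp ζ hζ)
    have hζ' : |ζ.im| < π / 2 := hζ
    simp only [stripCoord, cayley]
    rw [show (1 + (exp ζ - 1) / (exp ζ + 1)) / (1 - (exp ζ - 1) / (exp ζ + 1)) = exp ζ by
      field_simp; ring]
    rw [abs_lt] at hζ'
    exact log_exp (by linarith [Real.pi_pos]) (by linarith [Real.pi_pos])
  · show |(log _).im| < π / 2
    rw [log_im, abs_arg_lt_pi_div_two_iff]
    exact Or.inl (re_cayley_pos hz)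
  · have he := Complex.add_one_ne_zero_of_re_pos (hexp ζ hζ)
    show ‖_‖ < 1
    rw [norm_div, div_lt_one (norm_pos_iff.2 he)]
    exact Complex.norm_sub_one_lt_norm_add_one_iff.2 (hexp ζ hζ)

def koebeStrip (c ζ : ℂ) : ℂ := if c = 0 then ζ / 2 else (exp (c * ζ) - 1) / (2 * c)

lemma hasDerivAt_koebeStrip (c ζ : ℂ) : HasDerivAt (koebeStrip c) (exp (c * ζ) / 2) ζ := by
  by_cases hc : c = 0
  · have hk : koebeStrip c = fun ζ => ζ / 2 := funext fun ζ => if_pos hc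
    rw [hk, hc, zero_mul, Complex.exp_zero]
    exact (hasDerivAt_id' ζ).div_const 2
  · have hk : koebeStrip c = fun ζ => (exp (c * ζ) - 1) / (2 * c) := funext fun ζ => if_neg hc
    rw [hk]
    refine (((hasDerivAt_id' ζ).const_mul c).cexp.sub_const 1).div_const (2 * c) |>.congr_deriv ?_
    field_simp

lemma koebeFn_eq_koebeStrip (c : ℂ) {z : ℂ} (hz : z ∈ unitDisk) :
    koebeFn c z = koebeStrip c (stripCoord z) := by
  by_cases hc : c = 0
  · simp [koebeFn, koebeStrip, stripCoord, cayley, hc]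
    ring
  · simp only [koebeFn, koebeStrip, stripCoord, hc, if_false]
    rw [show (1 + z) / (1 - z) = cayley z from rfl, cpow_def_of_ne_zero (cayley_ne_zero hz)]
    ring_nf

lemma hasDerivAt_stripCoord {z : ℂ} (hz : z ∈ unitDisk) :
    HasDerivAt stripCoord (2 / (1 - z ^ 2)) z := by
  have h1 := one_sub_ne_zero_of_mem_unitDisk hz
  have h2 : 1 + z ≠ 0 := fun h => cayley_ne_zero hz (by simp [cayley, h])
  have h3 : 1 - z ^ 2 ≠ 0 := by
    rw [show 1 - z ^ 2 = (1 - z) * (1 + z) by ring]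
    exact mul_ne_zero h1 h2
  refine (((hasDerivAt_id' z).const_add 1).div ((hasDerivAt_id' z).const_sub 1) h1).clog
    (mem_slitPlane_cayley hz) |>.congr_deriv ?_
  simp only [Pi.div_apply]
  field_simp
  ring

lemma hasDerivAt_koebeFn (c : ℂ) {z : ℂ} (hz : z ∈ unitDisk) :
    HasDerivAt (koebeFn c) (exp (c * stripCoord z) / (1 - z ^ 2)) z := by
  have hcomp := (hasDerivAt_koebeStrip c (stripCoord z)).comp z (hasDerivAt_stripCoord hz)
  have hEq : koebeFn c =ᶠ[nhds z] koebeStrip c ∘ stripCoord :=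
    Filter.eventually_of_mem (isOpen_unitDisk.mem_nhds hz) fun w hw => koebeFn_eq_koebeStrip c hw
  refine (hcomp.congr_of_eventuallyEq hEq).congr_deriv ?_
  ring

lemma lensMap_eq_exp_stripCoord {R : ℝ} {z : ℂ} (hz : z ∈ unitDisk) :
    lensMap R z = (exp (R * stripCoord z) - 1) / (exp (R * stripCoord z) + 1) := by
  simp only [lensMap, stripCoord]
  rw [show (1 + z) / (1 - z) = cayley z from rfl, cpow_def_of_ne_zero (cayley_ne_zero hz), mul_comm]

lemma koebeFn_zero (c : ℂ) : koebeFn c 0 = 0 := by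
  simp [koebeFn]

section Shear

variable {R : ℝ} {h g : ℂ → ℂ}

theorem add_eqOn_koebeFn_of_shear {a : ℂ} (hR : |R| ≤ 1)
    (hh : DifferentiableOn ℂ h unitDisk) (hg : DifferentiableOn ℂ g unitDisk)
    (h0 : h 0 = 0) (g0 : g 0 = 0)
    (hshear : ∀ z ∈ unitDisk, h z - g z = koebeFn a z)
    (hdil : ∀ z ∈ unitDisk, deriv g z = lensMap R z * deriv h z) :
    EqOn (h + g) (koebeFn (a + R)) unitDisk := by
  have hderiv : EqOn (deriv (h + g)) (deriv (koebeFn (a + R))) unitDisk := by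
    intro z hz
    have hnhds := isOpen_unitDisk.mem_nhds hz
    have hhz := (hh z hz).differentiableAt hnhds
    have hgz := (hg z hz).differentiableAt hnhds
    have hsub : deriv h z - deriv g z = exp (a * stripCoord z) / (1 - z ^ 2) := by
      rw [← deriv_sub hhz hgz]
      exact ((hasDerivAt_koebeFn a hz).congr_of_eventuallyEq
        (Filter.eventually_of_mem hnhds hshear)).deriv
    -- `(1 + l_R) / (1 - l_R) = ((1 + z) / (1 - z)) ^ R`
    have hlens : deriv h z + deriv g z =
        exp (R * stripCoord z) * (deriv h z - deriv g z) := by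
      have hq := Complex.add_one_ne_zero_of_re_pos
        (re_exp_ofReal_mul_pos hR (bijOn_stripCoord.mapsTo hz))
      have := hdil z hz
      rw [lensMap_eq_exp_stripCoord hz, div_mul_eq_mul_div, eq_div_iff hq] at this
      linear_combination this
    rw [deriv_add hhz hgz, hlens, hsub, (hasDerivAt_koebeFn _ hz).deriv, add_mul, exp_add]
    ring
  refine isOpen_unitDisk.eqOn_of_deriv_eq ?_ (hh.add hg)
    (fun z hz => (hasDerivAt_koebeFn _ hz).differentiableAt.differentiableWithinAt) hderiv
    (show (0 : ℂ) ∈ unitDisk by simp [unitDisk]) (by simp [h0, g0, koebeFn_zero])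
  rw [unitDisk_eq_ball]
  exact (convex_ball 0 1).isPreconnected

end Shear

section StripCoordinates

variable {a c u t : ℝ}

def koebeStripRe (c u t : ℝ) : ℝ :=
  if c = 0 then u / 2 else (Real.exp (c * u) * Real.cos (c * t) - 1) / (2 * c)

def koebeStripIm (c u t : ℝ) : ℝ :=
  if c = 0 then t / 2 else Real.exp (c * u) * Real.sin (c * t) / (2 * c)

lemma re_koebeStrip (c : ℝ) (ζ : ℂ) : (koebeStrip c ζ).re = koebeStripRe c ζ.re ζ.im := by
  by_cases hc : c = 0
  · simp [koebeStrip, koebeStripRe, hc]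
  · have : ((2 * c : ℝ) : ℂ) = 2 * c := by push_cast; ring
    simp only [koebeStrip, koebeStripRe, ofReal_eq_zero, hc, if_false, ← this, div_ofReal_re,
      sub_re, one_re, exp_re, re_ofReal_mul, im_ofReal_mul]

lemma im_koebeStrip (c : ℝ) (ζ : ℂ) : (koebeStrip c ζ).im = koebeStripIm c ζ.re ζ.im := by
  by_cases hc : c = 0
  · simp [koebeStrip, koebeStripIm, hc]
  · have : ((2 * c : ℝ) : ℂ) = 2 * c := by push_cast; ring
    simp only [koebeStrip, koebeStripIm, ofReal_eq_zero, hc, if_false, ← this, div_ofReal_im,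
      sub_im, one_im, sub_zero, exp_im, re_ofReal_mul, im_ofReal_mul]

lemma koebeStripRe_neg : koebeStripRe c u (-t) = koebeStripRe c u t := by
  simp [koebeStripRe]

lemma koebeStripIm_neg : koebeStripIm c u (-t) = -koebeStripIm c u t := by
  unfold koebeStripIm
  split_ifs <;> simp [Real.sin_neg, neg_div]

lemma koebeStripRe_injective (hc : 0 < Real.cos (c * t)) :
    Function.Injective fun u => koebeStripRe c u t := by
  intro u₁ u₂ hu
  by_cases hc0 : c = 0
  · simpa [koebeStripRe, hc0] using hu
  · simp only [koebeStripRe, hc0, if_false] at hu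
    have hexp : Real.exp (c * u₁) = Real.exp (c * u₂) := by
      field_simp at hu
      exact mul_right_cancel₀ hc.ne' (by linarith)
    exact mul_left_cancel₀ hc0 (Real.exp_injective hexp)

lemma sin_mul_div_pos (ha : |a| ≤ 2) (ha0 : a ≠ 0) (ht : t ∈ Ioo 0 (π / 2)) :
    0 < Real.sin (a * t) / a := by
  have hat : |a| * t < π := by nlinarith [abs_nonneg a, ht.1, ht.2]
  rcases ha0.lt_or_gt with hneg | hpos
  · rw [abs_of_neg hneg] at hat
    rw [← neg_div_neg_eq, ← Real.sin_neg, ← neg_mul]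
    exact div_pos (Real.sin_pos_of_pos_of_lt_pi (by nlinarith [ht.1]) hat) (by linarith)
  · rw [abs_of_pos hpos] at hat
    exact div_pos (Real.sin_pos_of_pos_of_lt_pi (mul_pos hpos ht.1) hat) hpos

lemma koebeStripIm_pos (ha : |a| ≤ 2) (ht : t ∈ Ioo 0 (π / 2)) : 0 < koebeStripIm a u t := by
  unfold koebeStripIm
  split_ifs with ha0
  · linarith [ht.1]
  · rw [mul_div_assoc, div_mul_eq_div_div_swap]
    exact mul_pos (Real.exp_pos _) (div_pos (sin_mul_div_pos ha ha0 ht) two_pos)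

lemma sign_koebeStripIm (ha : |a| ≤ 2) (ht : |t| < π / 2) :
    SignType.sign (koebeStripIm a u t) = SignType.sign t := by
  rw [abs_lt] at ht
  rcases lt_trichotomy t 0 with htneg | rfl | htpos
  · have := koebeStripIm_pos (u := u) ha (t := -t) ⟨by linarith, by linarith⟩
    rw [koebeStripIm_neg] at this
    rw [sign_neg (by linarith), sign_neg htneg]
  · simp [koebeStripIm]
  · rw [sign_pos (koebeStripIm_pos ha ⟨htpos, ht.2⟩), sign_pos htpos]

end StripCoordinates

section LevelCurve

variable {a b R D t : ℝ}

def levelCurve (a D t : ℝ) : ℝ := Real.log (2 * a * D / Real.sin (a * t)) / a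

lemma eq_levelCurve {u : ℝ} (ha : a ≠ 0) (hs : Real.sin (a * t) ≠ 0)
    (hD : koebeStripIm a u t = D) : u = levelCurve a D t := by
  rw [koebeStripIm, if_neg ha] at hD
  have hexp : Real.exp (a * u) = 2 * a * D / Real.sin (a * t) := by
    rw [← hD]
    field_simp
  rw [levelCurve, ← hexp, Real.log_exp]
  field_simp

lemma hasDerivAt_levelCurve (ha : a ≠ 0) (hD : D ≠ 0) (hs : Real.sin (a * t) ≠ 0) :
    HasDerivAt (levelCurve a D) (-Real.cos (a * t) / Real.sin (a * t)) t := by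
  have hsin := ((hasDerivAt_id' t).const_mul a).sin
  refine (((hasDerivAt_const t (2 * a * D)).div hsin hs).log
    (by simp [ha, hD, hs])).div_const a |>.congr_deriv ?_
  simp only [Pi.div_apply]
  field_simp
  ring

lemma hasDerivAt_koebeStripRe_levelCurve (ha : a ≠ 0) (hD : D ≠ 0)
    (hs : Real.sin (a * t) ≠ 0) :
    HasDerivAt (fun t => koebeStripRe b (levelCurve a D t) t)
      (-Real.exp (b * levelCurve a D t) * Real.cos ((b - a) * t) / (2 * Real.sin (a * t))) t := by
  have hℓ := hasDerivAt_levelCurve ha hD hs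
  by_cases hb : b = 0
  · have hf : (fun t => koebeStripRe b (levelCurve a D t) t) = fun t => levelCurve a D t / 2 :=
      funext fun t => if_pos hb
    rw [hf]
    refine hℓ.div_const 2 |>.congr_deriv ?_
    simp [hb, Real.cos_neg]
    ring
  · have hf : (fun t => koebeStripRe b (levelCurve a D t) t) =
        fun t => (Real.exp (b * levelCurve a D t) * Real.cos (b * t) - 1) / (2 * b) :=
      funext fun t => if_neg hb
    rw [hf]
    refine (((hℓ.const_mul b).exp.mul ((hasDerivAt_id' t).const_mul b).cos).sub_const 1).div_const
      (2 * b) |>.congr_deriv ?_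
    rw [sub_mul, Real.cos_sub]
    field_simp
    ring

lemma strictAntiOn_koebeStripRe_levelCurve (ha : |a| ≤ 2) (ha0 : a ≠ 0) (hR : |R| ≤ 1)
    (hD : D ≠ 0) :
    StrictAntiOn (fun t => a * koebeStripRe (a + R) (levelCurve a D t) t) (Ioo 0 (π / 2)) := by
  have hs : ∀ t ∈ Ioo 0 (π / 2), 0 < Real.sin (a * t) / a := fun t ht =>
    sin_mul_div_pos ha ha0 ht
  have hderiv : ∀ t ∈ Ioo 0 (π / 2), HasDerivAt
      (fun t => a * koebeStripRe (a + R) (levelCurve a D t) t)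
      (-(Real.exp ((a + R) * levelCurve a D t) * Real.cos (R * t)) /
        (2 * (Real.sin (a * t) / a))) t := fun t ht => by
    have hsin : Real.sin (a * t) ≠ 0 := fun h => by simpa [h] using hs t ht
    refine (hasDerivAt_koebeStripRe_levelCurve ha0 hD hsin).const_mul a |>.congr_deriv ?_
    rw [add_sub_cancel_left]
    field_simp
  refine strictAntiOn_of_deriv_neg (convex_Ioo 0 (π / 2))
    (fun t ht => (hderiv t ht).continuousAt.continuousWithinAt) fun t ht => ?_
  rw [interior_Ioo] at ht
  rw [(hderiv t ht).deriv, neg_div]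
  have := cos_mul_pos hR (abs_lt.2 ⟨by linarith [ht.1, Real.pi_pos], ht.2⟩)
  have := hs t ht
  exact neg_neg_of_pos (by positivity)

end LevelCurve

section StripShear

variable {a R : ℝ}

def stripShear (a R : ℝ) (ζ : ℂ) : ℂ :=
  ⟨koebeStripRe (a + R) ζ.re ζ.im, koebeStripIm a ζ.re ζ.im⟩

lemma eq_of_koebeStrip_eq_of_pos (ha : |a| ≤ 2) (ha0 : a ≠ 0) (hR : |R| ≤ 1)
    {u₁ u₂ t₁ t₂ : ℝ} (ht₁ : t₁ ∈ Ioo 0 (π / 2)) (ht₂ : t₂ ∈ Ioo 0 (π / 2))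
    (hre : koebeStripRe (a + R) u₁ t₁ = koebeStripRe (a + R) u₂ t₂)
    (him : koebeStripIm a u₁ t₁ = koebeStripIm a u₂ t₂) : u₁ = u₂ ∧ t₁ = t₂ := by
  have hsin : ∀ t ∈ Ioo 0 (π / 2), Real.sin (a * t) ≠ 0 := fun t ht h => by
    simpa [h] using sin_mul_div_pos ha ha0 ht
  have hD : koebeStripIm a u₁ t₁ ≠ 0 := (koebeStripIm_pos ha ht₁).ne'
  have hu₁ := eq_levelCurve (u := u₁) ha0 (hsin t₁ ht₁) rfl
  have hu₂ := eq_levelCurve ha0 (hsin t₂ ht₂) him.symm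
  have ht : t₁ = t₂ := (strictAntiOn_koebeStripRe_levelCurve ha ha0 hR hD).injOn ht₁ ht₂ <| by
    rw [← hu₁, ← hu₂, hre]
  exact ⟨by rw [hu₁, hu₂, ht], ht⟩

theorem injOn_stripShear (ha : |a| ≤ 2) (hR : |R| ≤ 1) : InjOn (stripShear a R) strip := by
  rintro ⟨u₁, t₁⟩ (ht₁ : |t₁| < π / 2) ⟨u₂, t₂⟩ (ht₂ : |t₂| < π / 2) heq
  obtain ⟨hre, him⟩ := Complex.ext_iff.1 heq
  simp only [stripShear] at hre him
  suffices u₁ = u₂ ∧ t₁ = t₂ by rw [this.1, this.2]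
  by_cases ha0 : a = 0
  · subst ha0
    obtain rfl : t₁ = t₂ := by simpa [koebeStripIm] using him
    rw [zero_add] at hre
    exact ⟨koebeStripRe_injective (cos_mul_pos hR ht₁) hre, rfl⟩
  have hsign : SignType.sign t₁ = SignType.sign t₂ := by
    rw [← sign_koebeStripIm ha ht₁ (u := u₁), ← sign_koebeStripIm ha ht₂ (u := u₂), him]
  rcases lt_trichotomy t₁ 0 with hneg | rfl | hpos
  · have hneg₂ : t₂ < 0 := sign_eq_neg_one_iff.1 (hsign ▸ sign_neg hneg)
    obtain ⟨hu, ht⟩ := eq_of_koebeStrip_eq_of_pos ha ha0 hR (t₁ := -t₁) (t₂ := -t₂)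
      ⟨by linarith, by linarith [abs_lt.1 ht₁]⟩ ⟨by linarith, by linarith [abs_lt.1 ht₂]⟩
      (by rwa [koebeStripRe_neg, koebeStripRe_neg])
      (by rw [koebeStripIm_neg, koebeStripIm_neg, him])
    exact ⟨hu, neg_inj.1 ht⟩
  · obtain rfl : t₂ = 0 := sign_eq_zero_iff.1 (hsign ▸ sign_zero)
    exact ⟨koebeStripRe_injective (by simp) hre, rfl⟩
  · have hpos₂ : 0 < t₂ := sign_eq_one_iff.1 (hsign ▸ sign_pos hpos)
    exact eq_of_koebeStrip_eq_of_pos ha ha0 hR ⟨hpos, by linarith [abs_lt.1 ht₁]⟩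
      ⟨hpos₂, by linarith [abs_lt.1 ht₂]⟩ hre him

theorem not_injOn_stripShear (ha : 2 < |a|) : ¬ InjOn (stripShear a R) strip := by
  have ha0 : a ≠ 0 := by
    rintro rfl
    norm_num at ha
  have hφ : |π / a| < π / 2 := by
    rw [abs_div, abs_of_pos Real.pi_pos, div_lt_iff₀ (by positivity)]
    nlinarith [Real.pi_pos]
  have hφ0 : π / a ≠ 0 := div_ne_zero Real.pi_ne_zero ha0
  have him : koebeStripIm a 0 (π / a) = 0 := by
    simp [koebeStripIm, ha0, mul_div_cancel₀]
  intro hinj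
  have := @hinj ⟨0, π / a⟩ hφ ⟨0, -(π / a)⟩ (show |-(π / a)| < π / 2 by rwa [abs_neg]) <| by
    apply Complex.ext <;> simp [stripShear, koebeStripRe_neg, koebeStripIm_neg, him]
  exact hφ0 (by linarith [congrArg im this])

theorem injOn_stripShear_iff (hR : |R| ≤ 1) : InjOn (stripShear a R) strip ↔ -2 ≤ a ∧ a ≤ 2 :=
  ⟨fun h => abs_le.1 (not_lt.1 fun ha => not_injOn_stripShear ha h),
    fun ha => injOn_stripShear (abs_le.2 ha) hR⟩

end StripShear

theorem harmonicKoebe_eqOn_stripShear {a R : ℝ} {h g : ℂ → ℂ} (hR : |R| ≤ 1)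
    (hh : DifferentiableOn ℂ h unitDisk) (hg : DifferentiableOn ℂ g unitDisk)
    (h0 : h 0 = 0) (g0 : g 0 = 0)
    (hshear : ∀ z ∈ unitDisk, h z - g z = koebeFn (a : ℂ) z)
    (hdil : ∀ z ∈ unitDisk, deriv g z = lensMap R z * deriv h z) :
    EqOn (fun z => h z + (starRingEnd ℂ) (g z)) (stripShear a R ∘ stripCoord) unitDisk := by
  intro z hz
  have hsum := add_eqOn_koebeFn_of_shear hR hh hg h0 g0 hshear hdil hz
  apply Complex.ext
  · calc (h z + (starRingEnd ℂ) (g z)).re = (h z + g z).re := by simp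
      _ = (koebeFn ((a + R : ℝ) : ℂ) z).re := by rw [← Pi.add_apply, hsum, ofReal_add]
      _ = _ := by rw [koebeFn_eq_koebeStrip _ hz, re_koebeStrip]; rfl
  · calc (h z + (starRingEnd ℂ) (g z)).im = (h z - g z).im := by simp [sub_eq_add_neg]
      _ = (koebeFn (a : ℂ) z).im := by rw [hshear z hz]
      _ = _ := by rw [koebeFn_eq_koebeStrip _ hz, im_koebeStrip]; rfl

/-- For real `a` and `0 ≤ R ≤ 1`, the generalized harmonic Koebe function
`K_{a,R} = h + conj g` (where `(h, g)` solves the shear system `h - g = k_a`,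
`g' = l_R · h'`, `h(0) = g(0) = 0`) is univalent on the unit disk if and only if
`-2 ≤ a ≤ 2`. -/
theorem generalized_harmonic_koebe_univalent_iff (a R : ℝ) (hR0 : 0 ≤ R) (hR1 : R ≤ 1)
    (h g : ℂ → ℂ)
    (hh : DifferentiableOn ℂ h unitDisk) (hg : DifferentiableOn ℂ g unitDisk)
    (h0 : h 0 = 0) (g0 : g 0 = 0)
    (hshear : ∀ z ∈ unitDisk, h z - g z = koebeFn (a : ℂ) z)
    (hdil : ∀ z ∈ unitDisk, deriv g z = lensMap R z * deriv h z) :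
    Set.InjOn (fun z => h z + (starRingEnd ℂ) (g z)) unitDisk ↔ -2 ≤ a ∧ a ≤ 2 := by
  have hR : |R| ≤ 1 := abs_le.2 ⟨by linarith, hR1⟩
  rw [(harmonicKoebe_eqOn_stripShear hR hh hg h0 g0 hshear hdil).injOn_iff,
    bijOn_stripCoord.injOn.comp_iff, bijOn_stripCoord.image_eq]
  exact injOn_stripShear_iff hR
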